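/- For every real α > 0 and every natural number n, the generalized Laguerre function L_n^α defined for t > 0 by the Rodrigues formula L_n^α(t) = (t^{-α} e^t / n!) · (d/dt)^n (e^{-t} t^{α+n}) satisfies the weighted integral identity ∫_0^∞ t^{α-1} e^{-t} (L_n^α(t))² dt = Γ(n+α+1)/(α · n!). -/

import Mathlib

open Real MeasureTheory

/-- The generalized Laguerre function given by the Rodrigues formula
`L_n^α(t) = (t^{-α} e^t / n!) · (d/dt)^n (e^{-t} t^{α+n})`. -/
noncomputable def lag (α : ℝ) (n : ℕ) (t : ℝ) : ℝ :=
  t ^ (-α) * Real.exp t / n.factorial *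
    iteratedDeriv n (fun s : ℝ => Real.exp (-s) * s ^ (α + n)) t

/-!
Leibniz's rule turns the Rodrigues formula into `L_n^α(t) = ∑ₖ cₖ tᵏ` with
`cₖ = (-1)ᵏ C(n,k) (α+n)(α+n-1)⋯(α+k+1) / n!`. Integrating termwise against `t^(s-1) e^(-t)` and
writing `Γ(s+l) = s(s+1)⋯(s+l-1) Γ(s)`, the Chu–Vandermonde identity for falling factorials
collapses the sum to `∫₀^∞ t^(s-1) e^(-t) L_n^α(t) dt = Γ(s) (α+n-s)(α+n-s-1)⋯(α-s+1) / n!`,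
which vanishes at `s = α+k` for `1 ≤ k ≤ n`. So in
`∫₀^∞ t^(α-1) e^(-t) (L_n^α)² = ∑ₖ cₖ ∫₀^∞ t^(α+k-1) e^(-t) L_n^α` only `k = 0` survives, and it
contributes `c₀ Γ(α) = Γ(n+α+1) / (α n!)`.
-/

open Finset Polynomial

theorem descPochhammer_smeval_eq_eval {R : Type*} [CommRing R] (r : R) (k : ℕ) :
    (descPochhammer ℤ k).smeval r = (descPochhammer R k).eval r := by
  rw [← aeval_eq_smeval, aeval_def, eval₂_eq_eval_map, descPochhammer_map]

/-- Chu–Vandermonde at `β + (-s)`, with the falling factorials of `-s` rewritten as signed rising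
factorials of `s`. -/
theorem descPochhammer_eval_sub_eq_sum {R : Type*} [CommRing R] (β s : R) (n : ℕ) :
    (descPochhammer R n).eval (β - s) = ∑ l ∈ range (n + 1), (-1) ^ l * n.choose l *
        (descPochhammer R (n - l)).eval β * (ascPochhammer R l).eval s := by
  rw [sub_eq_neg_add, ← descPochhammer_smeval_eq_eval,
    Ring.descPochhammer_smeval_add n (Commute.all _ _), Nat.sum_antidiagonal_eq_sum_range_succ
      (fun i j => (n.choose i : R) *
        ((descPochhammer ℤ i).smeval (-s) * (descPochhammer ℤ j).smeval β))]
  refine sum_congr rfl fun l _ => ?_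
  rw [descPochhammer_smeval_eq_eval, descPochhammer_smeval_eq_eval,
    ← neg_neg s, ascPochhammer_eval_neg_eq_descPochhammer, neg_neg]
  have hsq : (-1 : R) ^ l * (-1) ^ l = 1 := pow_mul_pow_eq_one l (by norm_num)
  linear_combination
    -(n.choose l * (descPochhammer R (n - l)).eval β * (descPochhammer R l).eval (-s)) * hsq

theorem Real.Gamma_add_nat_eq_ascPochhammer_mul {s : ℝ} (hs : ∀ k : ℕ, s ≠ -k) (m : ℕ) :
    Gamma (s + m) = (ascPochhammer ℝ m).eval s * Gamma s := by
  induction m with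
  | zero => simp
  | succ m ih =>
    have hsm : s + m ≠ 0 := fun h => hs m (eq_neg_of_add_eq_zero_left h)
    rw [Nat.cast_succ, ← add_assoc, Gamma_add_one hsm, ih, ascPochhammer_succ_eval]
    ring

theorem iteratedDeriv_exp_neg (n : ℕ) (t : ℝ) :
    iteratedDeriv n (fun s => exp (-s)) t = (-1) ^ n * exp (-t) := by
  simpa using congrFun (iteratedDeriv_exp_const_mul n (-1)) t

noncomputable def laguerreCoeff (α : ℝ) (n k : ℕ) : ℝ :=
  (-1) ^ k * n.choose k * (descPochhammer ℝ (n - k)).eval (α + n) / n.factorial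

theorem lag_eq_sum_laguerreCoeff_mul_pow {α t : ℝ} (ht : 0 < t) (n : ℕ) :
    lag α n t = ∑ k ∈ range (n + 1), laguerreCoeff α n k * t ^ k := by
  rw [lag, iteratedDeriv_fun_mul (f := fun s => exp (-s)) (by fun_prop)
    (contDiffAt_rpow_const (Or.inl ht.ne')), mul_sum]
  refine sum_congr rfl fun k hk => ?_
  have hkn : k ≤ n := Nat.lt_succ_iff.mp (mem_range.mp hk)
  have hpow : t ^ (-α) * t ^ (α + n - (n - k : ℕ)) = t ^ k := by
    rw [← rpow_add ht, Nat.cast_sub hkn, ← rpow_natCast]; ring_nf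
  have hexp : exp t * exp (-t) = 1 := by rw [← exp_add, add_neg_cancel, exp_zero]
  rw [iteratedDeriv_exp_neg, iteratedDeriv_eq_iterate, iter_deriv_rpow_const, laguerreCoeff,
    ← hpow]
  linear_combination (-1) ^ k * n.choose k * (descPochhammer ℝ (n - k)).eval (α + n) /
    n.factorial * t ^ (-α) * t ^ (α + n - (n - k : ℕ)) * hexp

theorem rpow_mul_exp_neg_mul_lag_eq_sum {α s t : ℝ} (ht : 0 < t) (n : ℕ) :
    t ^ (s - 1) * exp (-t) * lag α n t =
      ∑ l ∈ range (n + 1), laguerreCoeff α n l * (exp (-t) * t ^ (s + l - 1)) := by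
  rw [lag_eq_sum_laguerreCoeff_mul_pow ht, mul_sum]
  refine sum_congr rfl fun l _ => ?_
  rw [add_sub_right_comm, rpow_add ht, rpow_natCast]
  ring

theorem integrableOn_rpow_mul_exp_neg_mul_lag {s : ℝ} (hs : 0 < s) (α : ℝ) (n : ℕ) :
    IntegrableOn (fun t => t ^ (s - 1) * exp (-t) * lag α n t) (Set.Ioi 0) :=
  IntegrableOn.congr_fun
    (integrable_finsetSum _ fun _ _ => (GammaIntegral_convergent (by positivity)).const_mul _)
    (fun _ ht => (rpow_mul_exp_neg_mul_lag_eq_sum ht n).symm) measurableSet_Ioi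

theorem integral_rpow_mul_exp_neg_mul_lag {s : ℝ} (hs : 0 < s) (α : ℝ) (n : ℕ) :
    ∫ t in Set.Ioi 0, t ^ (s - 1) * exp (-t) * lag α n t =
      Gamma s * (descPochhammer ℝ n).eval (α + n - s) / n.factorial := by
  have hpole : ∀ k : ℕ, s ≠ -k := fun k => ((neg_nonpos.2 k.cast_nonneg).trans_lt hs).ne'
  rw [setIntegral_congr_fun measurableSet_Ioi fun t ht => rpow_mul_exp_neg_mul_lag_eq_sum ht n,
    integral_finsetSum _ fun l _ => (GammaIntegral_convergent (by positivity)).const_mul _,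
    descPochhammer_eval_sub_eq_sum, mul_sum, sum_div]
  refine sum_congr rfl fun l _ => ?_
  rw [integral_const_mul, ← Gamma_eq_integral (by positivity),
    Gamma_add_nat_eq_ascPochhammer_mul hpole, laguerreCoeff]
  ring

theorem rpow_mul_exp_neg_mul_lag_sq_eq_sum {α t : ℝ} (ht : 0 < t) (n : ℕ) :
    t ^ (α - 1) * exp (-t) * lag α n t ^ 2 =
      ∑ k ∈ range (n + 1), laguerreCoeff α n k * (t ^ (α + k - 1) * exp (-t) * lag α n t) := by
  nth_rw 1 [sq, lag_eq_sum_laguerreCoeff_mul_pow ht n]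
  rw [sum_mul, mul_sum]
  refine sum_congr rfl fun k _ => ?_
  rw [add_sub_right_comm, rpow_add ht, rpow_natCast]
  ring

theorem laguerreCoeff_zero_mul_Gamma {α : ℝ} (hα : ∀ k : ℕ, α ≠ -k) (n : ℕ) :
    laguerreCoeff α n 0 * Gamma α = Gamma (n + α + 1) / (α * n.factorial) := by
  have hα0 : α ≠ 0 := by simpa using hα 0
  have hpole : ∀ k : ℕ, α + 1 ≠ -k := fun k h => hα (k + 1) (by push_cast; linarith)
  have hΓ : Gamma (n + α + 1) = (descPochhammer ℝ n).eval (α + n) * α * Gamma α := by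
    rw [descPochhammer_eval_eq_ascPochhammer, add_sub_cancel_right, mul_assoc,
      ← Gamma_add_one hα0, ← Gamma_add_nat_eq_ascPochhammer_mul hpole]
    ring_nf
  rw [laguerreCoeff, hΓ, pow_zero, Nat.choose_zero_right, Nat.sub_zero, Nat.cast_one, one_mul]
  field_simp

theorem laguerre_weighted_integral_identity (α : ℝ) (hα : 0 < α) (n : ℕ) :
    ∫ t in Set.Ioi (0 : ℝ), t ^ (α - 1) * Real.exp (-t) * lag α n t ^ 2 =
      Real.Gamma (n + α + 1) / (α * n.factorial) := by
  have horth : ∀ k ∈ range (n + 1), k ≠ 0 →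
      (descPochhammer ℝ n).eval (α + n - (α + k)) = 0 := by
    intro k hk hk0
    have hkn := Nat.lt_succ_iff.mp (mem_range.mp hk)
    rw [show α + n - (α + k) = ((n - k : ℕ) : ℝ) by rw [Nat.cast_sub hkn]; ring]
    exact descPochhammer_eval_coe_nat_of_lt (by omega)
  rw [setIntegral_congr_fun measurableSet_Ioi fun t ht => rpow_mul_exp_neg_mul_lag_sq_eq_sum ht n,
    integral_finsetSum _ fun k _ =>
      (integrableOn_rpow_mul_exp_neg_mul_lag (by positivity) α n).const_mul _]
  simp_rw [integral_const_mul]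
  rw [sum_congr rfl fun k _ => by rw [integral_rpow_mul_exp_neg_mul_lag (by positivity)],
    sum_eq_single 0 (fun k hk hk0 => by rw [horth k hk hk0]; ring) (by simp)]
  simp only [Nat.cast_zero, add_zero, add_sub_cancel_left, descPochhammer_eval_eq_descFactorial,
    Nat.descFactorial_self]
  rw [mul_div_cancel_right₀ _ (by positivity)]
  exact laguerreCoeff_zero_mul_Gamma (fun k => ((neg_nonpos.2 k.cast_nonneg).trans_lt hα).ne') n
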